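/- arXiv:math/9908142 — 2 statements merged into one kernel-verified Lean document; each statement's English description precedes it below -/
import Mathlib

section
/- For every integer n ≥ 1 and k ∈ {0,1,2}, the sum over i ≥ 0 of b*_i(α,x) times the (i+k)-th derivative of the Laguerre polynomial L_n^{(α)}(x) equals (-n)_k/(n·Γ(k)) (interpreted as 0 when k=0 since 1/Γ(0)=0, and as (-n)_k/n for k=1,2), where b*_i(α,x) = (1/i!) ∑_{j=0}^{i} (-1)^j C(i,j) (α+1)_{i-j} x^j. -/
open Finset Real

/-- Rising factorial (Pochhammer symbol) `(a)_m`. -/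
noncomputable def poch (a : ℝ) (m : ℕ) : ℝ := (ascPochhammer ℝ m).eval a

/-- Generalized binomial coefficient `C(a,b) = (a-b+1)_b / b!`. -/
noncomputable def gbinom (a : ℝ) (b : ℕ) : ℝ := poch (a - b + 1) b / (Nat.factorial b : ℝ)

/-- Classical Laguerre polynomial `L_n^{(α)}(x)`. -/
noncomputable def lag (α : ℝ) (n : ℕ) (x : ℝ) : ℝ :=
  ∑ k ∈ Finset.range (n + 1),
    ((-1 : ℝ) ^ k / (Nat.factorial k : ℝ)) * gbinom ((n : ℝ) + α) (n - k) * x ^ k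

/-- Coefficients `b*_i(α,x)`. -/
noncomputable def bstar (α : ℝ) (i : ℕ) (x : ℝ) : ℝ :=
  (1 / (Nat.factorial i : ℝ)) * ∑ j ∈ Finset.range (i + 1),
    (-1 : ℝ) ^ j * (Nat.choose i j : ℝ) * poch (α + 1) (i - j) * x ^ j

section Aux

open Polynomial

lemma gbinom_eq_choose (a : ℝ) (b : ℕ) : gbinom a b = Ring.choose a b := by
  have h1 : (descPochhammer ℤ b).smeval a = b.factorial • Ring.choose a b :=
    Ring.descPochhammer_eq_factorial_smul_choose a b
  have h2 : (descPochhammer ℤ b).smeval a = (descPochhammer ℝ b).eval a := by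
    rw [← Polynomial.aeval_eq_smeval, Polynomial.aeval_def, Polynomial.eval₂_eq_eval_map,
      descPochhammer_map]
  have h3 : (descPochhammer ℝ b).eval a = poch (a - b + 1) b :=
    descPochhammer_eval_eq_ascPochhammer (R := ℝ) a b
  have hb : (b.factorial : ℝ) ≠ 0 := Nat.cast_ne_zero.mpr b.factorial_ne_zero
  rw [gbinom, ← h3, ← h2, h1, nsmul_eq_mul]
  field_simp

lemma poch_neg_shift (b : ℝ) (u : ℕ) : poch (-b - u + 1) u = (-1)^u * poch b u := by
  have h := ascPochhammer_eval_neg_eq_descPochhammer (R := ℝ) (b + (u:ℝ) - 1) u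
  rw [descPochhammer_eval_eq_ascPochhammer (R := ℝ)] at h
  have e1 : -(b + (u:ℝ) - 1) = -b - u + 1 := by ring
  have e2 : b + (u:ℝ) - 1 - u + 1 = b := by ring
  rw [e1, e2] at h
  simpa [poch] using h

lemma vandermonde (a b : ℝ) (N : ℕ) :
    ∑ u ∈ range (N + 1), gbinom a u * gbinom b (N - u) = gbinom (a + b) N := by
  rw [gbinom_eq_choose (a+b), Ring.add_choose_eq N (Commute.all a b),
    Finset.Nat.sum_antidiagonal_eq_sum_range_succ_mk]
  exact Finset.sum_congr rfl fun u _ => by rw [gbinom_eq_choose, gbinom_eq_choose]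

lemma key_sum (α : ℝ) (n : ℕ) (hn : 1 ≤ n) (N : ℕ) :
    ∑ u ∈ range (N + 1), (-1:ℝ)^u * poch (α+1) u / u.factorial * gbinom ((n:ℝ) + α) (N - u)
      = ((n-1).choose N : ℝ) := by
  have hterm : ∀ u : ℕ, (-1:ℝ)^u * poch (α+1) u / u.factorial = gbinom (-α-1) u := by
    intro u
    rw [gbinom]
    have : -α - 1 - (u:ℝ) + 1 = -(α+1) - u + 1 := by ring
    rw [this, poch_neg_shift]
    try ring
  rw [Finset.sum_congr rfl fun u _ => by rw [hterm], vandermonde]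
  have : -α - 1 + ((n:ℝ) + α) = (((n-1 : ℕ)) : ℝ) := by
    rw [Nat.cast_sub hn]; push_cast; try ring
  rw [this, gbinom_eq_choose, Ring.choose_natCast]

/-- The Laguerre polynomial as a `Polynomial`. -/
noncomputable def lagP (α : ℝ) (n : ℕ) : ℝ[X] :=
  ∑ l ∈ range (n + 1), C ((-1:ℝ)^l / l.factorial * gbinom ((n:ℝ) + α) (n - l)) * X ^ l

lemma lag_eq_eval (α : ℝ) (n : ℕ) : lag α n = fun x => (lagP α n).eval x := by
  funext x
  simp [lag, lagP, eval_finset_sum, mul_assoc]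

lemma natDegree_lagP_le (α : ℝ) (n : ℕ) : (lagP α n).natDegree ≤ n := by
  apply Polynomial.natDegree_sum_le_of_forall_le
  intro l hl
  refine le_trans (natDegree_C_mul_le _ _) ?_
  simpa [natDegree_X_pow] using Nat.lt_succ_iff.mp (mem_range.mp hl)

lemma coeff_lagP (α : ℝ) (n m : ℕ) :
    (lagP α n).coeff m
      = if m ≤ n then (-1:ℝ)^m / m.factorial * gbinom ((n:ℝ) + α) (n - m) else 0 := by
  rw [lagP, finset_sum_coeff]
  simp only [coeff_C_mul, coeff_X_pow, mul_ite, mul_one, mul_zero]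
  simp [Finset.sum_ite_eq' (range (n+1)) m, Nat.lt_succ_iff, eq_comm]

lemma iteratedDeriv_polyEval (p : ℝ[X]) (m : ℕ) :
    iteratedDeriv m (fun x => p.eval x) = fun x => ((Polynomial.derivative)^[m] p).eval x := by
  induction m with
  | zero => simp
  | succ m ih =>
    rw [iteratedDeriv_succ, ih]
    funext x
    rw [Function.iterate_succ_apply']
    exact Polynomial.deriv (p := Polynomial.derivative^[m] p)

lemma iterate_derivative_finset_sum (s : Finset ℕ) (f : ℕ → ℝ[X]) (j : ℕ) :
    Polynomial.derivative^[j] (∑ u ∈ s, f u) = ∑ u ∈ s, Polynomial.derivative^[j] (f u) := by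
  induction j with
  | zero => simp
  | succ j ih => simp [Function.iterate_succ_apply', ih, derivative_sum]

lemma taylor_sum_eval_zero (G : ℝ[X]) (n : ℕ) (hG : G.natDegree ≤ n) (x : ℝ) :
    ∑ j ∈ range (n+1), (Polynomial.derivative^[j] G).eval x / j.factorial * (-x)^j
      = G.eval 0 := by
  have h0 : G.eval 0 = (Polynomial.taylor x G).eval (-x) := by
    rw [Polynomial.taylor_eval]; norm_num
  rw [h0, Polynomial.eval_eq_sum_range'
    (lt_of_le_of_lt (by rw [Polynomial.natDegree_taylor]; exact hG) (Nat.lt_succ_self n))]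
  refine Finset.sum_congr rfl fun j hj => ?_
  rw [Polynomial.taylor_coeff]
  congr 1
  have h := congrFun (Polynomial.factorial_smul_hasseDeriv (R := ℝ) j) G
  have hj' : ((j.factorial : ℝ)) ≠ 0 := Nat.cast_ne_zero.mpr j.factorial_ne_zero
  have : (Polynomial.derivative^[j] G).eval x
      = j.factorial • (Polynomial.hasseDeriv j G).eval x := by
    rw [← h]; simp [Polynomial.eval_smul]
  rw [this, nsmul_eq_mul]
  field_simp

end Aux

/-- `∑_i b*_i(α,x) D^{i+k} L_n^{(α)}(x) = (-n)_k / (n Γ(k))` for n ≥ 1, k = 0,1,2.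
Note that `Real.Gamma 0 = 0` and division by zero is zero in Lean, which matches the
convention `1/Γ(0) = 0`. -/
theorem statement0 (α : ℝ) (hα : α > -1) (n : ℕ) (hn : 1 ≤ n) (k : ℕ) (hk : k ≤ 2) (x : ℝ) :
    ∑' i : ℕ, bstar α i x * iteratedDeriv (i + k) (lag α n) x
      = poch (-(n : ℝ)) k / ((n : ℝ) * Real.Gamma (k : ℝ)) := by
  classical
  set Q : Polynomial ℝ := lagP α n with hQdef
  have hQdeg : Q.natDegree ≤ n := natDegree_lagP_le α n
  have hDzero : ∀ m : ℕ, n < m → Polynomial.derivative^[m] Q = 0 := fun m hm =>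
    Polynomial.iterate_derivative_eq_zero (lt_of_le_of_lt hQdeg hm)
  have hlag : lag α n = fun y => Q.eval y := lag_eq_eval α n
  have hiter : ∀ m y, iteratedDeriv m (lag α n) y = (Polynomial.derivative^[m] Q).eval y := by
    intro m y; rw [hlag, iteratedDeriv_polyEval]
  set E : ℕ → ℝ := fun m => (Polynomial.derivative^[m] Q).eval x with hE
  have step0 : ∑' i : ℕ, bstar α i x * iteratedDeriv (i + k) (lag α n) x
      = ∑ i ∈ range (n+1), bstar α i x * E (i + k) := by
    have h1 : ∀ i : ℕ, bstar α i x * iteratedDeriv (i+k) (lag α n) x = bstar α i x * E (i+k) :=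
      fun i => by rw [hiter]
    rw [tsum_congr h1]
    refine tsum_eq_sum fun i hi => ?_
    have hni : n < i + k := by simp only [mem_range] at hi; omega
    simp [hE, hDzero _ hni]
  rw [step0]
  have step1 : ∑ i ∈ range (n+1), bstar α i x * E (i+k)
      = ∑ i ∈ range (n+1), ∑ j ∈ range (n+1),
          (1 / (i.factorial : ℝ)) * ((-1:ℝ)^j * (i.choose j : ℝ) * poch (α+1) (i-j) * x^j)
            * E (i+k) := by
    refine Finset.sum_congr rfl fun i hi => ?_
    rw [bstar, Finset.mul_sum, Finset.sum_mul]
    refine Finset.sum_subset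
      (Finset.range_subset_range.mpr (by simp only [mem_range] at hi; omega)) (fun j hj hj' => ?_)
    have : i < j := by simp only [mem_range, not_lt] at hj'; omega
    simp [Nat.choose_eq_zero_of_lt this]
  rw [step1, Finset.sum_comm]
  -- inner reindex to u = i - j
  have step3 : ∀ j ∈ range (n+1),
      ∑ i ∈ range (n+1),
        (1 / (i.factorial : ℝ)) * ((-1:ℝ)^j * (i.choose j : ℝ) * poch (α+1) (i-j) * x^j)
          * E (i+k)
      = ∑ u ∈ range (n+1),
          ((-1:ℝ)^j * x^j / j.factorial) * (poch (α+1) u / u.factorial * E (j+(u+k))) := by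
    intro j hj
    have hjn : j ≤ n := Nat.lt_succ_iff.mp (mem_range.mp hj)
    have e1 : ∑ i ∈ range (n+1),
        (1 / (i.factorial : ℝ)) * ((-1:ℝ)^j * (i.choose j : ℝ) * poch (α+1) (i-j) * x^j)
          * E (i+k)
        = ∑ i ∈ Finset.Ico j (n+1),
        (1 / (i.factorial : ℝ)) * ((-1:ℝ)^j * (i.choose j : ℝ) * poch (α+1) (i-j) * x^j)
          * E (i+k) := by
      refine (Finset.sum_subset (fun i hi => ?_) (fun i hi hi' => ?_)).symm
      · simp only [Finset.mem_Ico, mem_range] at hi ⊢; omega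
      · have : i < j := by
          simp only [Finset.mem_Ico, mem_range, not_and, not_le, not_lt] at hi hi'; omega
        simp [Nat.choose_eq_zero_of_lt this]
    have e2 : ∑ i ∈ Finset.Ico j (n+1),
        (1 / (i.factorial : ℝ)) * ((-1:ℝ)^j * (i.choose j : ℝ) * poch (α+1) (i-j) * x^j)
          * E (i+k)
        = ∑ u ∈ range (n+1-j),
        (1 / ((j+u).factorial : ℝ))
          * ((-1:ℝ)^j * ((j+u).choose j : ℝ) * poch (α+1) ((j+u)-j) * x^j) * E ((j+u)+k) :=
      Finset.sum_Ico_eq_sum_range _ _ _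
    have e3 : ∑ u ∈ range (n+1-j),
        (1 / ((j+u).factorial : ℝ))
          * ((-1:ℝ)^j * ((j+u).choose j : ℝ) * poch (α+1) ((j+u)-j) * x^j) * E ((j+u)+k)
        = ∑ u ∈ range (n+1),
        (1 / ((j+u).factorial : ℝ))
          * ((-1:ℝ)^j * ((j+u).choose j : ℝ) * poch (α+1) ((j+u)-j) * x^j) * E ((j+u)+k) := by
      refine Finset.sum_subset (Finset.range_subset_range.mpr (by omega)) (fun u hu hu' => ?_)
      have hvan : n < (j + u) + k := by
        simp only [mem_range, not_lt] at hu hu'; omega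
      simp [hE, hDzero _ hvan]
    rw [e1, e2, e3]
    refine Finset.sum_congr rfl fun u hu => ?_
    have hsub : j + u - j = u := Nat.add_sub_cancel_left j u
    have hadd : j + u + k = j + (u + k) := by omega
    rw [hsub, hadd]
    have hc : (((j+u).choose j : ℕ) : ℝ) * (j.factorial : ℝ) * (u.factorial : ℝ)
        = ((j+u).factorial : ℝ) := by
      have := Nat.choose_mul_factorial_mul_factorial (Nat.le_add_right j u)
      rw [Nat.add_sub_cancel_left] at this
      exact_mod_cast this
    have hj0 : (j.factorial : ℝ) ≠ 0 := Nat.cast_ne_zero.mpr j.factorial_ne_zero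
    have hu0 : (u.factorial : ℝ) ≠ 0 := Nat.cast_ne_zero.mpr u.factorial_ne_zero
    have hju0 : ((j+u).factorial : ℝ) ≠ 0 := Nat.cast_ne_zero.mpr (j+u).factorial_ne_zero
    field_simp
    linear_combination (poch (α+1) u * x^j * E (j+(u+k))) * hc
  rw [Finset.sum_congr rfl step3]
  -- introduce G
  set G : Polynomial ℝ :=
    ∑ u ∈ range (n+1), Polynomial.C (poch (α+1) u / u.factorial)
      * Polynomial.derivative^[u+k] Q with hGdef
  have hGj : ∀ j : ℕ, (Polynomial.derivative^[j] G).eval x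
      = ∑ u ∈ range (n+1), poch (α+1) u / u.factorial * E (j+(u+k)) := by
    intro j
    rw [hGdef, iterate_derivative_finset_sum, Polynomial.eval_finset_sum]
    refine Finset.sum_congr rfl fun u hu => ?_
    rw [Polynomial.iterate_derivative_C_mul, Polynomial.eval_C_mul,
      ← Function.iterate_add_apply]
  have hGdeg : G.natDegree ≤ n := by
    refine Polynomial.natDegree_sum_le_of_forall_le _ _ fun u hu => ?_
    refine le_trans (Polynomial.natDegree_C_mul_le _ _) ?_
    exact le_trans (Polynomial.natDegree_iterate_derivative Q (u+k))
      (le_trans (Nat.sub_le _ _) hQdeg)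
  have step5 : ∑ j ∈ range (n+1),
      ∑ u ∈ range (n+1),
        ((-1:ℝ)^j * x^j / j.factorial) * (poch (α+1) u / u.factorial * E (j+(u+k)))
      = G.eval 0 := by
    rw [← taylor_sum_eval_zero G n hGdeg x]
    refine Finset.sum_congr rfl fun j hj => ?_
    rw [← Finset.mul_sum, ← hGj]
    ring
  rw [step5]
  -- evaluate G at 0
  have step6 : G.eval 0 = ∑ u ∈ range (n+1),
      poch (α+1) u / u.factorial * (((u+k).factorial : ℝ) * Q.coeff (u+k)) := by
    rw [hGdef, Polynomial.eval_finset_sum]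
    refine Finset.sum_congr rfl fun u hu => ?_
    rw [Polynomial.eval_C_mul, ← Polynomial.coeff_zero_eq_eval_zero,
      Polynomial.coeff_iterate_derivative, zero_add, Nat.descFactorial_self, nsmul_eq_mul]
  rw [step6]
  have hcoeff : ∀ u : ℕ, Q.coeff (u+k)
      = if u + k ≤ n then (-1:ℝ)^(u+k) / (u+k).factorial * gbinom ((n:ℝ) + α) (n - (u+k))
        else 0 := fun u => coeff_lagP α n (u+k)
  have step7 : ∑ u ∈ range (n+1),
        poch (α+1) u / u.factorial * (((u+k).factorial : ℝ) * Q.coeff (u+k))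
      = ∑ u ∈ range (n+1-k),
          (-1:ℝ)^k * ((-1:ℝ)^u * poch (α+1) u / u.factorial
            * gbinom ((n:ℝ) + α) ((n-k) - u)) := by
    have h1 : ∀ u ∈ range (n+1),
        poch (α+1) u / u.factorial * (((u+k).factorial : ℝ) * Q.coeff (u+k))
        = if u + k ≤ n then
            (-1:ℝ)^k * ((-1:ℝ)^u * poch (α+1) u / u.factorial
              * gbinom ((n:ℝ) + α) ((n-k) - u))
          else 0 := by
      intro u hu
      rw [hcoeff u]
      by_cases h : u + k ≤ n
      · rw [if_pos h, if_pos h]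
        have huk0 : (((u+k).factorial : ℕ) : ℝ) ≠ 0 :=
          Nat.cast_ne_zero.mpr (u+k).factorial_ne_zero
        have hnd : n - (u+k) = (n-k) - u := by omega
        rw [hnd, pow_add]
        field_simp
      · rw [if_neg h, if_neg h, mul_zero, mul_zero]
    rw [Finset.sum_congr rfl h1, ← Finset.sum_filter]
    congr 1
    ext u
    simp only [Finset.mem_filter, mem_range]
    omega
  rw [step7, ← Finset.mul_sum]
  -- final case analysis
  have hn0 : (n : ℝ) ≠ 0 := Nat.cast_ne_zero.mpr (by omega)
  interval_cases k
  · -- k = 0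
    have hr : n + 1 - 0 = (n - 0) + 1 := by omega
    rw [hr]
    rw [key_sum α n hn (n-0)]
    have : (n-1).choose (n-0) = 0 := Nat.choose_eq_zero_of_lt (by omega)
    rw [this]
    simp [poch, Real.Gamma_zero]
  · -- k = 1
    have hr : n + 1 - 1 = (n - 1) + 1 := by omega
    rw [hr, key_sum α n hn (n-1), Nat.choose_self]
    have hg : Real.Gamma ((1:ℕ) : ℝ) = 1 := by norm_num [Real.Gamma_one]
    have hp : poch (-(n:ℝ)) 1 = -(n:ℝ) := by simp [poch, ascPochhammer_one]
    rw [hp]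
    norm_num [Real.Gamma_one]
    field_simp
  · -- k = 2
    have hp : poch (-(n:ℝ)) 2 = (-(n:ℝ)) * (-(n:ℝ) + 1) := by
      simp [poch, ascPochhammer_succ_eval, ascPochhammer_one]
    have hg : Real.Gamma ((2:ℕ) : ℝ) = 1 := by norm_num [Real.Gamma_two]
    rcases Nat.lt_or_ge n 2 with h2 | h2
    · -- n = 1
      have hn1 : n = 1 := by omega
      subst hn1
      norm_num [hp, hg]
      simp [poch, ascPochhammer_succ_eval, ascPochhammer_one]
    · have hr : n + 1 - 2 = (n - 2) + 1 := by omega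
      rw [hr, key_sum α n hn (n-2)]
      have hch : (n-1).choose (n-2) = n - 1 := by
        have h3 : n - 1 = (n-2) + 1 := by omega
        rw [h3, Nat.choose_succ_self_right]
      have hcast : ((n - 1 : ℕ) : ℝ) = (n:ℝ) - 1 := by
        rw [Nat.cast_sub hn]; norm_num
      rw [hch, hp, hcast]
      norm_num [Real.Gamma_two]
      field_simp
      ring
end

section
/- For nonnegative integer α, the polynomials a_i(x) := (1/i!) ∑_{j=1}^{i} (-1)^{i+j+1} C(α+1, j-1) C(α+2, i-j) (α+3)_{i-j} x^j (for i ≥ 1) satisfy ∑_{i=1}^{∞} a_i(x) = 0 for every real x. -/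
open Finset Real

/-- The coefficients `a_i(x)` of the infinite order Laguerre differential equation. -/
noncomputable def aCoeff (α : ℝ) (i : ℕ) (x : ℝ) : ℝ :=
  (1 / (Nat.factorial i : ℝ)) * ∑ j ∈ Finset.Icc 1 i,
    (-1 : ℝ) ^ (i + j + 1) * gbinom (α + 1) (j - 1) * gbinom (α + 2) (i - j) *
      poch (α + 3) (i - j) * x ^ j

/- ### Auxiliary lemmas -/

lemma poch_neg_nat : ∀ b k : ℕ, k < b → poch (-(k : ℝ)) b = 0 := by
  intro b
  induction b with
  | zero => intro k hk; omega
  | succ b ih =>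
    intro k hk
    unfold poch
    rw [ascPochhammer_succ_left, Polynomial.eval_mul, Polynomial.eval_X,
      Polynomial.eval_comp, Polynomial.eval_add, Polynomial.eval_X, Polynomial.eval_one]
    rcases Nat.eq_zero_or_pos k with h0 | h0
    · subst h0; simp
    · have : (-(k : ℝ) + 1) = -((k - 1 : ℕ) : ℝ) := by
        have : (1:ℕ) ≤ k := h0
        push_cast [Nat.cast_sub this]
        ring
      rw [this]
      have h2 := ih (k - 1) (by omega)
      unfold poch at h2
      rw [h2]
      ring

lemma gbinom_nat_lt (n b : ℕ) (h : n < b) : gbinom (n : ℝ) b = 0 := by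
  unfold gbinom
  have hb : 1 ≤ b := by omega
  have hcast : (n : ℝ) - b + 1 = -(((b - 1 - n : ℕ)) : ℝ) := by
    have h1 : n ≤ b - 1 := by omega
    push_cast [Nat.cast_sub h1, Nat.cast_sub hb]
    ring
  rw [hcast, poch_neg_nat b (b - 1 - n) (by omega), zero_div]

lemma poch_nat_succ (r m : ℕ) : poch ((r : ℝ) + 1) m = ((r + m).factorial : ℝ) / (r.factorial : ℝ) := by
  have h := factorial_mul_ascPochhammer ℝ r m
  have hr : (r.factorial : ℝ) ≠ 0 := by exact_mod_cast r.factorial_ne_zero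
  field_simp [poch]
  rw [mul_comm]
  unfold poch
  exact_mod_cast h

lemma gbinom_nat (n b : ℕ) (h : b ≤ n) : gbinom (n : ℝ) b = (n.choose b : ℝ) := by
  unfold gbinom
  have hcast : (n : ℝ) - b + 1 = ((n - b : ℕ) : ℝ) + 1 := by
    push_cast [Nat.cast_sub h]; ring
  rw [hcast, poch_nat_succ, Nat.cast_choose ℝ h]
  rw [Nat.sub_add_cancel h]
  rw [div_div, mul_comm]

lemma fact_mul_prod (b m : ℕ) : ∀ a, b ≤ a →
    (b + m).factorial * ∏ k ∈ Finset.Icc (b + 1) a, (m + k) = (a + m).factorial := by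
  intro a
  induction a with
  | zero => intro h; interval_cases b; simp [Nat.add_comm]
  | succ a ih =>
    intro h
    rcases Nat.lt_or_ge a b with h1 | h1
    · have hb : b = a + 1 := by omega
      subst hb
      rw [Finset.Icc_eq_empty (by omega)]
      simp [Nat.add_comm]
    · rw [Finset.prod_Icc_succ_top (by omega), ← mul_assoc, ih h1]
      have : a + 1 + m = (a + m) + 1 := by omega
      rw [this, Nat.factorial_succ]
      ring

/- ### The alternating-sum-of-polynomial lemma -/

open Polynomial in
lemma fwdDiff_eval (P : ℝ[X]) :
    fwdDiff (1 : ℝ) (fun x ↦ P.eval x) = fun x ↦ (P.comp (X + C 1) - P).eval x := by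
  funext x
  simp [fwdDiff, Polynomial.eval_comp]

open Polynomial in
lemma degree_comp_sub_lt (P : ℝ[X]) (n : ℕ) (h : P.degree < (n : ℕ) + 1) :
    (P.comp (X + C 1) - P).degree < (n : ℕ) := by
  by_cases hd : P.degree ≤ 0
  · have hP : P = C (P.coeff 0) := eq_C_of_degree_le_zero hd
    rw [hP, C_comp, sub_self, degree_zero]
    exact bot_lt_iff_ne_bot.2 (by simp)
  · push_neg at hd
    have hP0 : P ≠ 0 := by
      intro h0; rw [h0, degree_zero] at hd; exact absurd hd (by simp)
    have hcomp0 : P.comp (X + C 1) ≠ 0 := comp_X_add_C_ne_zero_iff.2 hP0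
    have hdeg : (P.comp (X + C 1)).degree = P.degree := by
      rw [degree_eq_natDegree hcomp0, degree_eq_natDegree hP0]
      congr 1
      rw [← taylor_apply, natDegree_taylor]
    have hlead : (P.comp (X + C 1)).leadingCoeff = P.leadingCoeff := by
      rw [leadingCoeff_comp (by rw [natDegree_X_add_C]; exact one_ne_zero)]
      rw [leadingCoeff_X_add_C, one_pow, mul_one]
    have := degree_sub_lt hdeg hcomp0 hlead
    rw [hdeg] at this
    calc (P.comp (X + C 1) - P).degree < P.degree := this
      _ ≤ (n : ℕ) := by
        rw [degree_eq_natDegree hP0] at h ⊢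
        exact_mod_cast Nat.lt_succ_iff.mp (by exact_mod_cast h)

open Polynomial in
lemma fwdDiff_iter_poly_zero : ∀ (n : ℕ) (P : ℝ[X]), P.degree < (n : ℕ) →
    (fwdDiff (1:ℝ))^[n] (fun x ↦ P.eval x) = fun _ ↦ 0 := by
  intro n
  induction n with
  | zero =>
    intro P hP
    have : P = 0 := by
      rw [← degree_eq_bot]
      exact Nat.WithBot.lt_zero_iff.mp (by exact_mod_cast hP)
    subst this
    funext x; simp
  | succ n ih =>
    intro P hP
    rw [Function.iterate_succ_apply, fwdDiff_eval,
      ih _ (degree_comp_sub_lt P n (by exact_mod_cast hP))]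

open Polynomial in
lemma alt_sum_poly (n : ℕ) (P : ℝ[X]) (hP : P.degree < (n : ℕ)) :
    ∑ m ∈ Finset.range (n + 1), (-1 : ℝ) ^ m * (n.choose m : ℝ) * P.eval (m : ℝ) = 0 := by
  have h0 : (fwdDiff (1:ℝ))^[n] (fun x ↦ P.eval x) 0 = 0 := by
    rw [fwdDiff_iter_poly_zero n P hP]
  rw [fwdDiff_iter_eq_sum_shift] at h0
  have : ∑ m ∈ Finset.range (n + 1), (-1 : ℝ) ^ m * (n.choose m : ℝ) * P.eval (m : ℝ)
      = (-1 : ℝ) ^ n * ∑ k ∈ Finset.range (n + 1),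
        ((-1 : ℤ) ^ (n - k) * (n.choose k : ℤ)) • P.eval ((0 : ℝ) + k • (1 : ℝ)) := by
    rw [Finset.mul_sum]
    refine Finset.sum_congr rfl fun k hk ↦ ?_
    have hk' : k ≤ n := Nat.lt_succ_iff.mp (Finset.mem_range.mp hk)
    have hs : (-1 : ℝ) ^ n * (-1 : ℝ) ^ (n - k) = (-1 : ℝ) ^ k := by
      rw [← pow_add, show n + (n - k) = k + 2 * (n - k) by omega, pow_add, pow_mul]
      simp
    simp only [zsmul_eq_mul, nsmul_eq_mul, mul_one, zero_add]
    push_cast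
    linear_combination (-((n.choose k : ℝ) * P.eval (k : ℝ))) * hs
  rw [this, h0, mul_zero]

/- ### The key identity -/

open Polynomial in
lemma key_identity (α j : ℕ) (hj1 : 1 ≤ j) (hj2 : j ≤ α + 2) :
    ∑ m ∈ Finset.range (α + 3), (-1 : ℝ) ^ m * ((α + 2).choose m : ℝ) *
      (poch ((α : ℝ) + 3) m / ((j + m).factorial : ℝ)) = 0 := by
  set P : ℝ[X] := ∏ k ∈ Finset.Icc (j + 1) (α + 2), (X + C (k : ℝ)) with hP
  have hdegP : P.degree < ((α + 2 : ℕ) : WithBot ℕ) := by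
    rw [hP, degree_prod]
    have : ∀ k ∈ Finset.Icc (j + 1) (α + 2), (X + C (k : ℝ)).degree = 1 := fun k _ ↦ degree_X_add_C _
    rw [Finset.sum_congr rfl this, Finset.sum_const, Nat.card_Icc]
    have hcard : α + 2 + 1 - (j + 1) = α + 2 - j := by omega
    rw [hcard]
    have : (α + 2 - j) • (1 : WithBot ℕ) = ((α + 2 - j : ℕ) : WithBot ℕ) := by
      simp
    rw [this]
    exact_mod_cast (by omega : α + 2 - j < α + 2)
  have hterm : ∀ m ∈ Finset.range (α + 3),
      (-1 : ℝ) ^ m * ((α + 2).choose m : ℝ) * (poch ((α : ℝ) + 3) m / ((j + m).factorial : ℝ))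
      = (1 / ((α + 2).factorial : ℝ)) * ((-1 : ℝ) ^ m * ((α + 2).choose m : ℝ) * P.eval (m : ℝ)) := by
    intro m _
    have hpoch : poch ((α : ℝ) + 3) m = (((α + 2) + m).factorial : ℝ) / ((α + 2).factorial : ℝ) := by
      have := poch_nat_succ (α + 2) m
      push_cast at this ⊢
      convert this using 2
      ring
    have hevalP : P.eval (m : ℝ) = ((∏ k ∈ Finset.Icc (j + 1) (α + 2), (m + k) : ℕ) : ℝ) := by
      rw [hP, eval_prod]
      push_cast
      exact Finset.prod_congr rfl fun k _ ↦ by simp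
    have hnat := fact_mul_prod j m (α + 2) hj2
    have h1 : ((j + m).factorial : ℝ) ≠ 0 := by exact_mod_cast Nat.factorial_ne_zero _
    have h2 : ((α + 2).factorial : ℝ) ≠ 0 := by exact_mod_cast Nat.factorial_ne_zero _
    have hprod : P.eval (m : ℝ) = (((α + 2) + m).factorial : ℝ) / ((j + m).factorial : ℝ) := by
      rw [hevalP, eq_div_iff h1]
      exact_mod_cast (mul_comm ((j + m).factorial) _ ▸ hnat)
    rw [hpoch, hprod]
    field_simp
  rw [Finset.sum_congr rfl hterm, ← Finset.mul_sum,
    alt_sum_poly (α + 2) P hdegP, mul_zero]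

/- ### Vanishing of `aCoeff` for large `i` -/

lemma aCoeff_eq_zero (α : ℕ) (x : ℝ) (i : ℕ) (hi : 2 * α + 5 ≤ i) :
    aCoeff (α : ℝ) i x = 0 := by
  unfold aCoeff
  rw [Finset.sum_eq_zero, mul_zero]
  intro j hj
  rw [Finset.mem_Icc] at hj
  rcases Nat.lt_or_ge (α + 2) j with h | h
  · have h0 : gbinom ((α : ℝ) + 1) (j - 1) = 0 := by
      have : ((α : ℝ) + 1) = ((α + 1 : ℕ) : ℝ) := by push_cast; ring
      rw [this]
      exact gbinom_nat_lt (α + 1) (j - 1) (by omega)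
    rw [h0]; ring
  · have h0 : gbinom ((α : ℝ) + 2) (i - j) = 0 := by
      have : ((α : ℝ) + 2) = ((α + 2 : ℕ) : ℝ) := by push_cast; ring
      rw [this]
      exact gbinom_nat_lt (α + 2) (i - j) (by omega)
    rw [h0]; ring

/-- for nonnegative integer α, `∑_{i=1}^∞ a_i(x) = 0`. -/
theorem statement2 (α : ℕ) (x : ℝ) :
    ∑' i : ℕ, aCoeff (α : ℝ) (i + 1) x = 0 := by
  set N := 2 * α + 4 with hN
  rw [tsum_eq_sum (s := Finset.range N)
    (fun i hi ↦ aCoeff_eq_zero α x (i + 1) (by rw [Finset.mem_range] at hi; omega))]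
  have hreindex : ∑ i ∈ Finset.range N, aCoeff (α : ℝ) (i + 1) x
      = ∑ i ∈ Finset.Icc 1 N, aCoeff (α : ℝ) i x := by
    rw [← Finset.Ico_add_one_right_eq_Icc, Finset.sum_Ico_eq_sum_range]
    refine (Finset.sum_congr (by norm_num) fun i _ ↦ ?_).symm
    rw [Nat.add_comm]
  rw [hreindex]
  have hswap : ∑ i ∈ Finset.Icc 1 N, aCoeff (α : ℝ) i x
      = ∑ j ∈ Finset.Icc 1 N, ∑ i ∈ Finset.Icc j N,
          (1 / (Nat.factorial i : ℝ)) * ((-1 : ℝ) ^ (i + j + 1) * gbinom ((α:ℝ) + 1) (j - 1) *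
            gbinom ((α:ℝ) + 2) (i - j) * poch ((α:ℝ) + 3) (i - j) * x ^ j) := by
    unfold aCoeff
    rw [Finset.sum_congr rfl fun i _ ↦ Finset.mul_sum _ _ _]
    exact Finset.sum_comm' fun i j ↦ by
      simp only [Finset.mem_Icc]; omega
  rw [hswap]
  refine Finset.sum_eq_zero fun j hj ↦ ?_
  rw [Finset.mem_Icc] at hj
  rcases Nat.lt_or_ge (α + 2) j with hcase | hcase
  · refine Finset.sum_eq_zero fun i _ ↦ ?_
    have h0 : gbinom ((α : ℝ) + 1) (j - 1) = 0 := by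
      have : ((α : ℝ) + 1) = ((α + 1 : ℕ) : ℝ) := by push_cast; ring
      rw [this]
      exact gbinom_nat_lt (α + 1) (j - 1) (by omega)
    rw [h0]; ring
  · rw [← Finset.Ico_add_one_right_eq_Icc, Finset.sum_Ico_eq_sum_range]
    have hsub : Finset.range (α + 3) ⊆ Finset.range (N + 1 - j) :=
      Finset.range_subset_range.2 (by omega)
    rw [← Finset.sum_subset hsub]
    · have hterm : ∀ m ∈ Finset.range (α + 3),
          (1 / (Nat.factorial (j + m) : ℝ)) * ((-1 : ℝ) ^ ((j + m) + j + 1) *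
            gbinom ((α:ℝ) + 1) (j - 1) * gbinom ((α:ℝ) + 2) ((j + m) - j) *
            poch ((α:ℝ) + 3) ((j + m) - j) * x ^ j)
          = (-(gbinom ((α:ℝ) + 1) (j - 1) * x ^ j)) *
              ((-1 : ℝ) ^ m * (((α + 2).choose m : ℕ) : ℝ) *
                (poch ((α : ℝ) + 3) m / ((j + m).factorial : ℝ))) := by
        intro m hm
        rw [Finset.mem_range] at hm
        have hij : (j + m) - j = m := by omega
        have hsign : (-1 : ℝ) ^ ((j + m) + j + 1) = -(-1 : ℝ) ^ m := by
          have : (j + m) + j + 1 = m + 1 + 2 * j := by ring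
          rw [this, pow_add, pow_mul]
          simp [pow_succ]
        have hgb : gbinom ((α:ℝ) + 2) m = (((α + 2).choose m : ℕ) : ℝ) := by
          have : ((α : ℝ) + 2) = ((α + 2 : ℕ) : ℝ) := by push_cast; ring
          rw [this]
          exact gbinom_nat (α + 2) m (by omega)
        rw [hij, hsign, hgb]
        ring
      rw [Finset.sum_congr rfl hterm, ← Finset.mul_sum,
        key_identity α j hj.1 hcase, mul_zero]
    · intro m hm1 hm2
      rw [Finset.mem_range] at hm1 hm2
      have h0 : gbinom ((α : ℝ) + 2) ((j + m) - j) = 0 := by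
        have hij : (j + m) - j = m := by omega
        have : ((α : ℝ) + 2) = ((α + 2 : ℕ) : ℝ) := by push_cast; ring
        rw [hij, this]
        exact gbinom_nat_lt (α + 2) m (by omega)
      rw [h0]; ring
end
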